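/- If G is triangle-free, then S[G,t] is triangle-free for every t ≥ 1. -/

import Mathlib

variable {V : Type*}

/-- Adjacency of the generalized Sierpiński graph `S(G,t)` on words of length `t`:
`u` and `v` are adjacent iff there is an index `i` with `u j = v j` for `j < i`,
`u i` adjacent to `v i` in `G`, and `u j = v i`, `v j = u i` for `j > i`. -/
def sierAdj (G : SimpleGraph V) (t : ℕ) (u v : Fin t → V) : Prop :=
  ∃ i : Fin t, (∀ j, j < i → u j = v j) ∧ G.Adj (u i) (v i) ∧
    ∀ j, i < j → u j = v i ∧ v j = u i

/-- The generalized Sierpiński graph `S(G,t)`. -/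
def sier (G : SimpleGraph V) (t : ℕ) : SimpleGraph (Fin t → V) where
  Adj := sierAdj G t
  symm := ⟨by
    rintro u v ⟨i, h1, h2, h3⟩
    exact ⟨i, fun j hj => (h1 j hj).symm, h2.symm,
      fun j hj => ⟨(h3 j hj).2, (h3 j hj).1⟩⟩⟩
  loopless := ⟨by
    rintro u ⟨i, h1, h2, h3⟩
    exact G.irrefl h2⟩

/-- `linkingAt G t p u v` : `uv` is a linking edge of `S(G,t)` appearing at
(0-indexed) position `p < t - 1`; in the paper's terminology this linking edge is
produced at step `t - p`, and its contraction is a vertex contracted at step `t - p`. -/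
def linkingAt (G : SimpleGraph V) (t p : ℕ) (u v : Fin t → V) : Prop :=
  ∃ i : Fin t, i.val = p ∧ i.val + 1 < t ∧ (∀ j, j < i → u j = v j) ∧
    G.Adj (u i) (v i) ∧ ∀ j, i < j → u j = v i ∧ v j = u i

/-- `uv` is a linking edge of `S(G,t)` (an edge appearing at some step `≥ 2`). -/
def linking (G : SimpleGraph V) (t : ℕ) (u v : Fin t → V) : Prop :=
  ∃ p, linkingAt G t p u v

/-- The equivalence relation on words generated by identifying the two endpoints
of each linking edge. -/
def gasketSetoid (G : SimpleGraph V) (t : ℕ) : Setoid (Fin t → V) :=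
  Relation.EqvGen.setoid (linking G t)

/-- The generalized Sierpiński gasket graph `S[G,t]`, obtained from `S(G,t)` by
contracting all linking edges. -/
def gasket (G : SimpleGraph V) (t : ℕ) :
    SimpleGraph (Quotient (gasketSetoid G t)) where
  Adj x y := x ≠ y ∧ ∃ u v, Quotient.mk (gasketSetoid G t) u = x ∧
    Quotient.mk (gasketSetoid G t) v = y ∧ sierAdj G t u v
  symm := ⟨by
    rintro x y ⟨hxy, u, v, hu, hv, h⟩
    exact ⟨hxy.symm, v, u, hv, hu, (sier G t).adj_symm h⟩⟩
  loopless := ⟨fun _ h => h.1 rfl⟩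

/-- The expanded word `i j j ... j`; for `ij ∈ E(G)` its class in `S[G,t]` is the
contracted vertex `{i,j}_t`. -/
def topWord (t : ℕ) (i j : V) : Fin t → V := fun k => if k.val = 0 then i else j

/-!
Edges of `S(G,t)` produced before the last position are linking edges and get contracted, so every
edge of `S[G,t]` comes from an edge inside a copy of `G`, between words differing only in their last
letter. A word has at most one linking partner, so a vertex of `S[G,t]` is a single word or a linked
pair. Hence a triangle of `S[G,t]` lifts to three such edges `ab`, `Bc`, `CA` with `b ~ B`, `c ~ C`,
`A ~ a`. If these identifications are all trivial, the last letters of `a, b, c` form a triangle of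
`G`. Otherwise let `m` be the first coordinate where one is not. The letters `b m`, `c m`, `A m`
name the copies containing the three edges; across a trivial identification they agree, across a
link at `m` they are adjacent in `G` and the last letters of the two words are swapped. Three links
give a triangle of `G`, two links force the edge between them to join equal last letters, and a
single link is impossible since the copies agree along the rest of the cycle.
-/

section

variable {G : SimpleGraph V} {t : ℕ}

def sierAdjAt (G : SimpleGraph V) (i : Fin t) (u v : Fin t → V) : Prop :=
  (∀ j < i, u j = v j) ∧ G.Adj (u i) (v i) ∧ ∀ j, i < j → u j = v i ∧ v j = u i

lemma sierAdjAt.symm {i : Fin t} {u v : Fin t → V} (h : sierAdjAt G i u v) :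
    sierAdjAt G i v u :=
  ⟨fun j hj => (h.1 j hj).symm, h.2.1.symm, fun j hj => (h.2.2 j hj).symm⟩

lemma linking_symm {u v : Fin t → V} (h : linking G t u v) : linking G t v u :=
  let ⟨p, i, hp, hi, hadj⟩ := h
  ⟨p, i, hp, hi, sierAdjAt.symm hadj⟩

end

section

variable {G : SimpleGraph V} {n : ℕ} {u v w : Fin (n + 1) → V}

lemma sierAdjAt.apply_last {i : Fin (n + 1)} (h : sierAdjAt G i u v) (hi : i < Fin.last n) :
    u (Fin.last n) = v i ∧ v (Fin.last n) = u i :=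
  h.2.2 _ hi

lemma sierAdjAt.index_unique {i k : Fin (n + 1)} (hv : sierAdjAt G i u v)
    (hw : sierAdjAt G k u w) (hi : i < Fin.last n) (hk : k < Fin.last n) : i = k := by
  -- a linking position of `u` is the last index at which `u` differs from its last letter
  have key : ∀ {i k : Fin (n + 1)} {v w}, sierAdjAt G i u v → sierAdjAt G k u w →
      k < Fin.last n → ¬ i < k := by
    intro i k v w hv hw hk hik
    have hlast : u k = u (Fin.last n) := by
      rw [(hv.2.2 k hik).1, (hv.apply_last (hik.trans hk)).1]
    rw [(hw.apply_last hk).1] at hlast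
    exact hw.2.1.ne hlast
  exact le_antisymm (not_lt.1 (key hw hv hi)) (not_lt.1 (key hv hw hk))

lemma sierAdjAt.right_unique {i k : Fin (n + 1)} (hv : sierAdjAt G i u v)
    (hw : sierAdjAt G k u w) (hi : i < Fin.last n) (hk : k < Fin.last n) : v = w := by
  obtain rfl := hv.index_unique hw hi hk
  funext j
  rcases lt_trichotomy j i with hj | rfl | hj
  · rw [← hv.1 j hj, hw.1 j hj]
  · rw [← (hv.apply_last hi).1, (hw.apply_last hi).1]
  · rw [(hv.2.2 j hj).2, (hw.2.2 j hj).2]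

lemma linking_iff : linking G (n + 1) u v ↔ ∃ i < Fin.last n, sierAdjAt G i u v := by
  constructor
  · rintro ⟨_, i, -, hi, h⟩
    exact ⟨i, Fin.lt_def.2 (by simp only [Fin.val_last]; omega), h⟩
  · rintro ⟨i, hi, h⟩
    exact ⟨i, i, rfl, by simpa [Fin.lt_def] using hi, h⟩

lemma linking_unique (hv : linking G (n + 1) u v) (hw : linking G (n + 1) u w) : v = w := by
  obtain ⟨i, hi, hv⟩ := linking_iff.1 hv
  obtain ⟨k, hk, hw⟩ := linking_iff.1 hw
  exact hv.right_unique hw hi hk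

lemma gasketSetoid_iff : gasketSetoid G (n + 1) u v ↔ u = v ∨ linking G (n + 1) u v := by
  constructor
  · intro h
    induction h with
    | rel _ _ h => exact .inr h
    | refl => exact .inl rfl
    | symm _ _ _ ih => exact ih.imp Eq.symm linking_symm
    | trans _ _ _ _ _ ih₁ ih₂ =>
      rcases ih₁ with rfl | h₁
      · exact ih₂
      rcases ih₂ with rfl | h₂
      · exact .inr h₁
      · exact .inl (linking_unique (linking_symm h₁) h₂)
  · rintro (rfl | h)
    · exact Relation.EqvGen.refl _
    · exact Relation.EqvGen.rel _ _ h

lemma apply_eq_or_sierAdjAt_of_gasketSetoid {m : Fin (n + 1)} (h : gasketSetoid G (n + 1) u v)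
    (hm : ∀ j < m, u j = v j) : u m = v m ∨ m < Fin.last n ∧ sierAdjAt G m u v := by
  rcases gasketSetoid_iff.1 h with rfl | h
  · exact .inl rfl
  obtain ⟨i, hi, h⟩ := linking_iff.1 h
  rcases lt_trichotomy i m with him | rfl | hmi
  · exact absurd (hm i him) h.2.1.ne
  · exact .inr ⟨hi, h⟩
  · exact .inl (h.1 m hmi)

lemma exists_sierAdjAt_last_of_gasket_adj {x y : Quotient (gasketSetoid G (n + 1))}
    (h : (gasket G (n + 1)).Adj x y) :
    ∃ u v, Quotient.mk _ u = x ∧ Quotient.mk _ v = y ∧ sierAdjAt G (Fin.last n) u v := by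
  obtain ⟨hne, u, v, rfl, rfl, i, hi⟩ := h
  refine ⟨u, v, rfl, rfl, ?_⟩
  rcases (Fin.le_last i).lt_or_eq with hlt | rfl
  · exact absurd (Quotient.sound (Relation.EqvGen.rel _ _ (linking_iff.2 ⟨i, hlt, hi⟩))) hne
  · exact hi

lemma not_cliqueFree_three_of_lifted_triangle {a b B c C A : Fin (n + 1) → V}
    (hab : sierAdjAt G (Fin.last n) a b) (hBc : sierAdjAt G (Fin.last n) B c)
    (hCA : sierAdjAt G (Fin.last n) C A) (hbB : gasketSetoid G (n + 1) b B)
    (hcC : gasketSetoid G (n + 1) c C) (hAa : gasketSetoid G (n + 1) A a) :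
    ¬ G.CliqueFree 3 := by
  intro hG
  have triangle : ∀ {x y z}, G.Adj x y → G.Adj y z → G.Adj z x → False := by
    classical
    exact fun hxy hyz hzx => hG {_, _, _} (SimpleGraph.is3Clique_triple_iff.2 ⟨hxy, hzx.symm, hyz⟩)
  by_cases hsame : b = B ∧ c = C ∧ A = a
  · obtain ⟨rfl, rfl, rfl⟩ := hsame
    exact triangle hab.2.1 hBc.2.1 hCA.2.1
  have hdiff : ∃ j, ¬ (b j = B j ∧ c j = C j ∧ A j = a j) := by
    by_contra! h
    exact hsame ⟨funext fun j => (h j).1, funext fun j => (h j).2.1, funext fun j => (h j).2.2⟩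
  obtain ⟨m, hm, hmin⟩ := wellFounded_lt.has_min _ hdiff
  have below : ∀ j < m, b j = B j ∧ c j = C j ∧ A j = a j := fun j hj =>
    not_not.1 fun h => hmin j h hj
  have hb := apply_eq_or_sierAdjAt_of_gasketSetoid hbB fun j hj => (below j hj).1
  have hc := apply_eq_or_sierAdjAt_of_gasketSetoid hcC fun j hj => (below j hj).2.1
  have ha := apply_eq_or_sierAdjAt_of_gasketSetoid hAa fun j hj => (below j hj).2.2
  have hmlast : m < Fin.last n := by
    by_contra h
    exact hm ⟨hb.resolve_right (h ∘ And.left), hc.resolve_right (h ∘ And.left),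
      ha.resolve_right (h ∘ And.left)⟩
  have hk₁ : a m = b m := hab.1 m hmlast
  have hk₂ : B m = c m := hBc.1 m hmlast
  have hk₃ : C m = A m := hCA.1 m hmlast
  rcases hb with hb | ⟨-, hb⟩ <;> rcases hc with hc | ⟨-, hc⟩ <;> rcases ha with ha | ⟨-, ha⟩
  · exact hm ⟨hb, hc, ha⟩
  all_goals grind [sierAdjAt, SimpleGraph.irrefl]

lemma gasket_zero : gasket G 0 = ⊥ :=
  eq_bot_iff.2 fun _ _ ⟨_, _, _, _, _, i, _⟩ => i.elim0

lemma gasket_succ_cliqueFree_three (hG : G.CliqueFree 3) :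
    (gasket G (n + 1)).CliqueFree 3 := by
  classical
  intro S hS
  obtain ⟨x, y, z, hxy, hxz, hyz, -⟩ := SimpleGraph.is3Clique_iff.1 hS
  obtain ⟨a, b, rfl, rfl, hab⟩ := exists_sierAdjAt_last_of_gasket_adj hxy
  obtain ⟨B, c, hB, rfl, hBc⟩ := exists_sierAdjAt_last_of_gasket_adj hyz
  obtain ⟨C, A, hC, hA, hCA⟩ := exists_sierAdjAt_last_of_gasket_adj hxz.symm
  exact not_cliqueFree_three_of_lifted_triangle hab hBc hCA (Quotient.exact hB.symm)
    (Quotient.exact hC.symm) (Quotient.exact hA) hG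

end

theorem stmt_8_general (G : SimpleGraph V) (hG : G.CliqueFree 3) (t : ℕ) :
    (gasket G t).CliqueFree 3 := by
  cases t with
  | zero => exact gasket_zero ▸ SimpleGraph.cliqueFree_bot (by norm_num)
  | succ n => exact gasket_succ_cliqueFree_three hG

/-- if `G` is triangle-free then `S[G,t]` is triangle-free for every `t ≥ 1`. -/
theorem stmt_8 (G : SimpleGraph V) (hG : G.CliqueFree 3) (t : ℕ) (ht : 1 ≤ t) :
    (gasket G t).CliqueFree 3 :=
  stmt_8_general G hG t
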